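/- With α a positive solution of Equation (3) and the thresholds u_i, ℓ_i defined from α, for every integer j with 0 ≤ j ≤ k it holds that Σ_{i=1}^j u_i + (k − j)·U + 2β ≤ α·(k·ℓ_{j+1} + 2β). -/

import Mathlib

open Finset

/-- DTPR-min threshold values `u_i`. -/
noncomputable def uMin (U β α : ℝ) (k : ℕ) (i : ℕ) : ℝ :=
  U * (1 - (1 - 1 / α) * (1 + 1 / ((k : ℝ) * α)) ^ (i - 1))
    + 2 * β * (1 / ((k : ℝ) * α) - 1 / (k : ℝ) + 1) * (1 + 1 / ((k : ℝ) * α)) ^ (i - 1)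

/-- DTPR-min threshold values `ℓ_i = u_i - 2β`. -/
noncomputable def lMin (U β α : ℝ) (k : ℕ) (i : ℕ) : ℝ :=
  uMin U β α k i - 2 * β

/-! The inequality holds with equality for every `j`: the thresholds are the solution of the
recurrence `k α (u_{i+1} - u_i) = u_i - U` (the gaps `u_i - U` grow geometrically with ratio
`1 + 1/(kα)`) started at the `u_1` for which the case `j = 0` is tight. Adding the recurrence
to the identity for `j` gives the identity for `j + 1`. -/

section

variable {U β α : ℝ} {k : ℕ}

theorem mul_sub_uMin_succ (hk : (k : ℝ) ≠ 0) (hα : α ≠ 0) {i : ℕ} (hi : 1 ≤ i) :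
    (k : ℝ) * α * (uMin U β α k (i + 1) - uMin U β α k i) = uMin U β α k i - U := by
  obtain ⟨n, rfl⟩ := Nat.exists_eq_add_of_le' hi
  simp only [uMin, Nat.add_sub_cancel, pow_succ]
  field_simp
  ring

theorem mul_lMin_one_add (hk : (k : ℝ) ≠ 0) (hα : α ≠ 0) :
    α * ((k : ℝ) * lMin U β α k 1 + 2 * β) = k * U + 2 * β := by
  simp only [lMin, uMin, Nat.sub_self, pow_zero]
  field_simp
  ring

theorem sum_uMin_add_eq (hk : (k : ℝ) ≠ 0) (hα : α ≠ 0) (j : ℕ) :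
    (∑ i ∈ Icc 1 j, uMin U β α k i) + ((k : ℝ) - (j : ℝ)) * U + 2 * β
      = α * ((k : ℝ) * lMin U β α k (j + 1) + 2 * β) := by
  induction j with
  | zero => simpa using (mul_lMin_one_add hk hα).symm
  | succ j ih =>
    have hrec := mul_sub_uMin_succ (U := U) (β := β) hk hα (Nat.le_add_left 1 j)
    rw [sum_Icc_succ_top (Nat.le_add_left 1 j), Nat.cast_succ]
    simp only [lMin] at ih ⊢
    linear_combination ih - hrec

end

theorem dtpr_min_intermediate_general
    (U : ℝ)
    (k : ℕ) (hk : 1 ≤ k)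
    (β : ℝ)
    (α : ℝ) (hα : 0 < α)
    (j : ℕ) :
    (∑ i ∈ Finset.Icc 1 j, uMin U β α k i) + ((k : ℝ) - (j : ℝ)) * U + 2 * β
      ≤ α * ((k : ℝ) * lMin U β α k (j + 1) + 2 * β) :=
  (sum_uMin_add_eq (by positivity) hα.ne' j).le

/-- **Lemma 5.1.** For any `0 ≤ j ≤ k`,
`Σ_{i=1}^j u_i + (k − j)·U + 2β ≤ α·(k·ℓ_{j+1} + 2β)`. -/
theorem dtpr_min_intermediate
    (L U : ℝ) (hL : 0 < L) (hLU : L < U)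
    (k : ℕ) (hk : 1 ≤ k)
    (β : ℝ) (hβ : 0 < 2 * β) (hβUL : 2 * β < U - L)
    (α : ℝ) (hα : 0 < α)
    (heq : U - L - 2 * β
      = (U * (1 - 1 / α) - 2 * β * (1 - 1 / (k : ℝ) + 1 / ((k : ℝ) * α)))
          * (1 + 1 / ((k : ℝ) * α)) ^ k)
    (j : ℕ) (hj : j ≤ k) :
    (∑ i ∈ Finset.Icc 1 j, uMin U β α k i) + ((k : ℝ) - (j : ℝ)) * U + 2 * β
      ≤ α * ((k : ℝ) * lMin U β α k (j + 1) + 2 * β) :=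
  dtpr_min_intermediate_general U k hk β α hα j
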